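/- arXiv:2410.01760 — 2 statements merged into one kernel-verified Lean document; each statement's English description precedes it below -/
import Mathlib

section
/- Let B be the BlindOracle strategy. Then OBJ_B ≤ OPT + η, where η = Σ_{t=1}^T |ν(t) − ω(t)| is the total prediction loss. In particular, the competitive ratio of BlindOracle is at most 1 + η/OPT. -/
namespace Caching

attribute [local instance low] Classical.propDecidable

/-- A run of a feasible eviction strategy on the request sequence `σ` with cache size `k`
and time horizon `T`.  `C t` is the cache after processing request `t` (with `C 0 = ∅`),
and `p t` is the page evicted at time `t` (meaningful at full-cache misses). -/
structure CacheRun (S : Type) [DecidableEq S] (k T : ℕ) (σ : ℕ → S) where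
  C : ℕ → Finset S
  p : ℕ → S
  init : C 0 = ∅
  card_le : ∀ t, (C t).card ≤ k
  hit : ∀ t, 1 ≤ t → t ≤ T → (σ t ∈ C (t - 1) ∨ (C (t - 1)).card < k) →
      C t = insert (σ t) (C (t - 1))
  evict_mem : ∀ t, 1 ≤ t → t ≤ T → σ t ∉ C (t - 1) → (C (t - 1)).card = k →
      p t ∈ C (t - 1)
  evict : ∀ t, 1 ≤ t → t ≤ T → σ t ∉ C (t - 1) → (C (t - 1)).card = k →
      C t = insert (σ t) ((C (t - 1)).erase (p t))

variable {S : Type} [DecidableEq S]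

/- `nextReq σ T t` is `ν(t)`: the first time `s > t` (with `s ≤ T`) at which the page
`σ t` is requested again, and `T + 1` if there is no such time. -/
open Classical in
noncomputable def nextReq (σ : ℕ → S) (T t : ℕ) : ℕ :=
  if h : ∃ s, t < s ∧ s ≤ T ∧ σ s = σ t then Nat.find h else T + 1

/-- The total prediction loss `η = Σ_{t=1}^T |ν(t) - ω(t)|`. -/
noncomputable def totalLoss (σ : ℕ → S) (T : ℕ) (ω : ℕ → ℕ) : ℕ :=
  ∑ t ∈ Finset.Icc 1 T, Nat.dist (nextReq σ T t) (ω t)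

/-- `I_Q(t)`: indices of the last requests (up to time `t`) of the currently cached pages. -/
noncomputable def lastIdx {k T : ℕ} {σ : ℕ → S} (R : CacheRun S k T σ) (t : ℕ) : Finset ℕ :=
  (Finset.Icc 1 t).filter fun i => σ i ∈ R.C t ∧ ∀ j ∈ Finset.Icc (i + 1) t, σ j ≠ σ i

/-- Time `t` is a full-cache miss (an eviction step). -/
def EvictStep {k T : ℕ} {σ : ℕ → S} (R : CacheRun S k T σ) (t : ℕ) : Prop :=
  1 ≤ t ∧ t ≤ T ∧ σ t ∉ R.C (t - 1) ∧ (R.C (t - 1)).card = k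

/-- At time `t` the run evicts the page whose last-request index is `i`. -/
def EvictsIdx {k T : ℕ} {σ : ℕ → S} (R : CacheRun S k T σ) (t i : ℕ) : Prop :=
  EvictStep R t ∧ i ∈ lastIdx R (t - 1) ∧ R.p t = σ i

/-- `OBJ_Q`: the number of cache misses of the run. -/
noncomputable def misses {k T : ℕ} {σ : ℕ → S} (R : CacheRun S k T σ) : ℕ :=
  ((Finset.Icc 1 T).filter fun t => σ t ∉ R.C (t - 1)).card

/-- Belady's algorithm: on a full-cache miss always evict the cached page with the
largest next-request time. -/
def IsBelady {k T : ℕ} {σ : ℕ → S} (A : CacheRun S k T σ) : Prop :=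
  ∀ t, EvictStep A t → ∀ i ∈ lastIdx A (t - 1), A.p t = σ i →
    ∀ j ∈ lastIdx A (t - 1), nextReq σ T j ≤ nextReq σ T i

/-- BlindOracle: on a full-cache miss always evict the cached page with the largest
predicted next-request time. -/
def IsBlindOracle {k T : ℕ} {σ : ℕ → S} (B : CacheRun S k T σ) (ω : ℕ → ℕ) : Prop :=
  ∀ t, EvictStep B t → ∀ i ∈ lastIdx B (t - 1), B.p t = σ i →
    ∀ j ∈ lastIdx B (t - 1), ω j ≤ ω i

/-- An eviction graph of a run: a directed graph on `{1,…,T}` whose every edge `(i, j)`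
corresponds to a distinct time (`time e`) at which the run made a mistake by evicting
page `σ j` while `i` was a strictly better eviction candidate in the cache. -/
structure EvictionGraph {k T : ℕ} {σ : ℕ → S} (R : CacheRun S k T σ) where
  E : Finset (ℕ × ℕ)
  time : ℕ × ℕ → ℕ
  time_inj : ∀ e ∈ E, ∀ e' ∈ E, time e = time e' → e = e'
  mistake : ∀ e ∈ E, EvictsIdx R (time e) e.2 ∧ e.1 ∈ lastIdx R (time e - 1) ∧
      nextReq σ T e.2 < nextReq σ T e.1

/-- The eviction at time `t` triggers the eviction at time `t'`: the page evicted
at `t` is next requested at `t' = ν(i)`, which is again an eviction step. -/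
def Triggers {k T : ℕ} {σ : ℕ → S} (R : CacheRun S k T σ) (t t' : ℕ) : Prop :=
  ∃ i, EvictsIdx R t i ∧ t' = nextReq σ T i ∧ ∃ j, EvictsIdx R t' j

/-- The eviction of the page with last-request index `i` triggers the eviction of the
page with last-request index `j` (at time `ν(i)`). -/
def TriggersIdx {k T : ℕ} {σ : ℕ → S} (R : CacheRun S k T σ) (i j : ℕ) : Prop :=
  (∃ t, EvictsIdx R t i) ∧ EvictsIdx R (nextReq σ T i) j

/-- The page requested at time `t` was never requested before. -/
def NewPage (σ : ℕ → S) (t : ℕ) : Prop := ∀ s, 1 ≤ s → s < t → σ s ≠ σ t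

/-- At time `t` the evicted page has the largest prediction among cached pages. -/
def BlindChoiceAt {k T : ℕ} {σ : ℕ → S} (R : CacheRun S k T σ) (ω : ℕ → ℕ) (t : ℕ) : Prop :=
  ∀ i ∈ lastIdx R (t - 1), R.p t = σ i → ∀ j ∈ lastIdx R (t - 1), ω j ≤ ω i

/-- Corrector's choice at time `t`: if some cached page has a provably wrong prediction
(`ω i < t`), evict such a page with minimal prediction; otherwise act as BlindOracle. -/
def CorrectorChoiceAt {k T : ℕ} {σ : ℕ → S} (R : CacheRun S k T σ) (ω : ℕ → ℕ) (t : ℕ) :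
    Prop :=
  ((∃ i ∈ lastIdx R (t - 1), ω i < t) →
    ∀ i ∈ lastIdx R (t - 1), R.p t = σ i →
      ω i < t ∧ ∀ j ∈ lastIdx R (t - 1), ω j < t → ω i ≤ ω j) ∧
  ((¬ ∃ i ∈ lastIdx R (t - 1), ω i < t) → BlindChoiceAt R ω t)

/-- The page requested at time `t` was last evicted (before `t`) at a step labeled with
strategy `s₀` (0 = BlindOracle, 1 = RandomAlg, 2 = Corrector). -/
def LastEvictedWith {k T : ℕ} {σ : ℕ → S} (R : CacheRun S k T σ) (strat : ℕ → Fin 3)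
    (t : ℕ) (s₀ : Fin 3) : Prop :=
  ∃ t₀, t₀ < t ∧ EvictStep R t₀ ∧ R.p t₀ = σ t ∧ strat t₀ = s₀ ∧
    ∀ t₁, t₀ < t₁ → t₁ < t → ¬(EvictStep R t₁ ∧ R.p t₁ = σ t)

/-- A run of the AlternatingOracle strategy (for a fixed realization of its random
choices), together with the labeling `strat` of which of the three strategies was used
at each eviction step: on a miss for a never-requested page use BlindOracle; if the
requested page was last evicted by BlindOracle use RandomAlg (an arbitrary cached page);
if by RandomAlg use Corrector; if by Corrector use BlindOracle. -/
def IsAlternatingOracle {k T : ℕ} {σ : ℕ → S} (R : CacheRun S k T σ) (ω : ℕ → ℕ)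
    (strat : ℕ → Fin 3) : Prop :=
  ∀ t, EvictStep R t →
    (NewPage σ t → strat t = 0 ∧ BlindChoiceAt R ω t) ∧
    (LastEvictedWith R strat t 0 → strat t = 1) ∧
    (LastEvictedWith R strat t 1 → strat t = 2 ∧ CorrectorChoiceAt R ω t) ∧
    (LastEvictedWith R strat t 2 → strat t = 0 ∧ BlindChoiceAt R ω t)

/-- AlternatingOracle driven by a seed `u` of uniform random values: at each eviction
step performed by RandomAlg at time `t`, the evicted page is the one whose last-request
index has rank `u t` among the `k` cached indices, so that for a uniformly random seed
the evicted page is uniform over the cache. -/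
def IsAlternatingOracleSeeded {k T : ℕ} {σ : ℕ → S} (R : CacheRun S k T σ) (ω : ℕ → ℕ)
    (strat : ℕ → Fin 3) (u : Fin (T + 1) → Fin k) : Prop :=
  IsAlternatingOracle R ω strat ∧
  ∀ t (h : EvictStep R t), strat t = 1 →
    ∀ i ∈ lastIdx R (t - 1), R.p t = σ i →
      ((lastIdx R (t - 1)).filter fun j => j < i).card =
        ((u ⟨t, Nat.lt_succ_of_le h.2.1⟩ : Fin k) : ℕ)

/-- The family of runs is adapted to the seeds: the behavior up to time `t` depends only
on the seed values with index at most `t` (the strategy is online). -/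
def Adapted {k T : ℕ} {σ : ℕ → S} (R : (Fin (T + 1) → Fin k) → CacheRun S k T σ)
    (strat : (Fin (T + 1) → Fin k) → ℕ → Fin 3) : Prop :=
  ∀ u u' t, (∀ s : Fin (T + 1), (s : ℕ) ≤ t → u s = u' s) →
    (R u).C t = (R u').C t ∧ (R u).p t = (R u').p t ∧ strat u t = strat u' t

/-- The probability of the outcome `x` for `T` i.i.d. Bernoulli(γ) random bits. -/
noncomputable def bernWeight (γ : ℝ) {T : ℕ} (x : Fin T → Bool) : ℝ :=
  ∏ i, if x i then γ else 1 - γ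

/-- `S(x, m)`: the number of ones among the first `m` coordinates of `x`. -/
noncomputable def scount {T : ℕ} (x : Fin T → Bool) (m : ℕ) : ℕ :=
  (Finset.univ.filter fun i : Fin T => (i : ℕ) < m ∧ x i).card

/-
Call an eviction of a run a mistake if some other cached page is requested later than the
evicted one. Against any run `A`, the run `B` satisfies, for every threshold `θ` and time `t`,
  `missCount B t + dueCount A θ t ≤ missCount A t + mistakeCount B t + dueCount B θ t`,
where `dueCount R θ t` counts the pages in `R`'s cache whose next request is at time `≤ θ`;
for `θ = 0` this is `OBJ_B ≤ OBJ_A + #mistakes`. The inequality propagates step by step; the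
only delicate step is a correct eviction by `B` of a page due by `θ`: then every page that `B`
caches and `A` does not is due by `θ`, so `dueCount A θ ≤ dueCount B θ`.

A mistake of BlindOracle evicting `e` while `z` with `ν z > ν e` is cached has `ω z ≤ ω e`, so
`e` is over-predicted or `ω z ≤ ν e < ν z`. Either way it is charged to a unit `(x, ν e)` of the
loss, with `x = e` or `x = z`. An index is evicted at most once and `ν` is injective below
`T + 1`, so distinct mistakes get distinct units and `#mistakes ≤ η`.
-/

variable {k T : ℕ} {σ : ℕ → S}

section Finset

lemma card_filter_Icc_one_eq_pred_add (p : ℕ → Prop) [DecidablePred p] {t : ℕ} (ht : 1 ≤ t) :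
    ((Finset.Icc 1 t).filter p).card =
      ((Finset.Icc 1 (t - 1)).filter p).card + if p t then 1 else 0 := by
  rw [← Finset.insert_Icc_sub_one_right_eq_Icc ht, Finset.filter_insert]
  have : t ∉ (Finset.Icc 1 (t - 1)).filter p := by simp; omega
  split_ifs <;> simp [Finset.card_insert_of_notMem this]

lemma card_filter_insert_erase {α : Type*} [DecidableEq α] (p : α → Prop) [DecidablePred p]
    {s : Finset α} {a b : α} (ha : a ∉ s) (hb : b ∈ s) :
    ((insert a (s.erase b)).filter p).card + (if p b then 1 else 0) =
      (s.filter p).card + if p a then 1 else 0 := by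
  have ha' : a ∉ (s.filter p).erase b :=
    fun h => ha (Finset.mem_filter.1 (Finset.mem_of_mem_erase h)).1
  have hb' : b ∈ s.filter p ↔ p b := by simp [hb]
  rw [Finset.filter_insert, Finset.filter_erase]
  split_ifs with hpa hpb hpb
  · rw [Finset.card_insert_of_notMem ha', Finset.card_erase_add_one (hb'.2 hpb)]
  · rw [Finset.card_insert_of_notMem ha', Finset.erase_eq_of_notMem (mt hb'.1 hpb)]
  · rw [Finset.card_erase_add_one (hb'.2 hpb), add_zero]
  · rw [Finset.erase_eq_of_notMem (mt hb'.1 hpb)]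

lemma card_filter_le_card_filter {α : Type*} [DecidableEq α] (p : α → Prop) [DecidablePred p]
    {s t : Finset α} (hcard : s.card = t.card) (h : ∀ x ∈ t \ s, p x) :
    (s.filter p).card ≤ (t.filter p).card := by
  have split : ∀ u v : Finset α,
      (u.filter p).card = ((u \ v).filter p).card + ((u ∩ v).filter p).card := fun u v => by
    rw [← Finset.card_union_of_disjoint (Finset.disjoint_filter_filter
      (Finset.disjoint_sdiff_inter u v)), ← Finset.filter_union, Finset.sdiff_union_inter]
  have hs := Finset.card_sdiff_add_card_inter s t
  have ht := Finset.card_sdiff_add_card_inter t s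
  rw [Finset.inter_comm] at ht
  have := split t s
  rw [Finset.filter_true_of_mem h, Finset.inter_comm] at this
  have := split s t
  have := Finset.card_filter_le (s \ t) p
  omega

end Finset

section NextReq

lemma lt_nextReq_or_eq (t : ℕ) : t < nextReq σ T t ∨ nextReq σ T t = T + 1 := by
  unfold nextReq
  split
  · next h => exact Or.inl (Nat.find_spec h).1
  · exact Or.inr rfl

lemma nextReq_le_succ (t : ℕ) : nextReq σ T t ≤ T + 1 := by
  unfold nextReq
  split
  · next h => exact (Nat.find_spec h).2.1.trans T.le_succ
  · exact le_rfl

lemma nextReq_le_of_eq {t s : ℕ} (hts : t < s) (hs : s ≤ T) (h : σ s = σ t) :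
    nextReq σ T t ≤ s := by
  have hex : ∃ s, t < s ∧ s ≤ T ∧ σ s = σ t := ⟨s, hts, hs, h⟩
  rw [nextReq, dif_pos hex]
  exact Nat.find_min' hex ⟨hts, hs, h⟩

lemma apply_nextReq {t : ℕ} (h : nextReq σ T t ≤ T) : σ (nextReq σ T t) = σ t := by
  by_cases hex : ∃ s, t < s ∧ s ≤ T ∧ σ s = σ t
  · rw [nextReq, dif_pos hex]
    exact (Nat.find_spec hex).2.2
  · rw [nextReq, dif_neg hex] at h
    omega

lemma eq_of_nextReq_eq {a b : ℕ} (ha : nextReq σ T a ≤ T)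
    (h : nextReq σ T a = nextReq σ T b) : a = b := by
  have hb : nextReq σ T b ≤ T := h ▸ ha
  have hσ : σ a = σ b := by rw [← apply_nextReq ha, ← apply_nextReq hb, h]
  have hav := (lt_nextReq_or_eq (σ := σ) (T := T) a).resolve_right (by omega)
  have hbv := (lt_nextReq_or_eq (σ := σ) (T := T) b).resolve_right (by omega)
  rcases lt_trichotomy a b with hab | rfl | hba
  · have := nextReq_le_of_eq (T := T) hab (by omega) hσ.symm
    omega
  · rfl
  · have := nextReq_le_of_eq (T := T) hba (by omega) hσ
    omega

end NextReq

namespace CacheRun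

variable (R : CacheRun S k T σ) {t : ℕ}

lemma C_eq_insert_or_erase (h1 : 1 ≤ t) (h2 : t ≤ T) :
    R.C t = insert (σ t) (R.C (t - 1)) ∨
      R.C t = insert (σ t) ((R.C (t - 1)).erase (R.p t)) := by
  by_cases h : σ t ∈ R.C (t - 1) ∨ (R.C (t - 1)).card < k
  · exact Or.inl (R.hit t h1 h2 h)
  · push Not at h
    exact Or.inr (R.evict t h1 h2 h.1 (le_antisymm (R.card_le _) h.2))

lemma C_subset_insert (h1 : 1 ≤ t) (h2 : t ≤ T) : R.C t ⊆ insert (σ t) (R.C (t - 1)) := by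
  rcases R.C_eq_insert_or_erase h1 h2 with h | h <;> rw [h]
  exact Finset.insert_subset_insert _ (Finset.erase_subset _ _)

lemma mem_C_self (h1 : 1 ≤ t) (h2 : t ≤ T) : σ t ∈ R.C t := by
  rcases R.C_eq_insert_or_erase h1 h2 with h | h <;> rw [h] <;> exact Finset.mem_insert_self _ _

lemma card_C_of_card_pred_eq (h1 : 1 ≤ t) (h2 : t ≤ T) (hfull : (R.C (t - 1)).card = k) :
    (R.C t).card = k := by
  by_cases hm : σ t ∈ R.C (t - 1)
  · rw [R.hit t h1 h2 (Or.inl hm), Finset.insert_eq_of_mem hm, hfull]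
  · rw [R.evict t h1 h2 hm hfull, Finset.card_insert_of_notMem
      (fun h => hm (Finset.mem_of_mem_erase h)),
      Finset.card_erase_of_mem (R.evict_mem t h1 h2 hm hfull), hfull]
    have := Finset.card_pos.2 ⟨_, R.evict_mem t h1 h2 hm hfull⟩
    omega

lemma mem_C_of_forall_ne {s : ℕ} {pg : S} (hpg : pg ∈ R.C s) (hts : t ≤ s) (hs : s ≤ T)
    (hreq : ∀ j, t < j → j ≤ s → σ j ≠ pg) : pg ∈ R.C t := by
  induction s, hts using Nat.le_induction with
  | base => exact hpg
  | succ s hts ih =>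
    have hmem := R.C_subset_insert (t := s + 1) (by omega) hs hpg
    rw [Finset.mem_insert] at hmem
    refine ih (hmem.resolve_left fun h => hreq (s + 1) (by omega) le_rfl h.symm) (by omega)
      fun j hj hjs => hreq j hj (by omega)

lemma exists_request {pg : S} (hpg : pg ∈ R.C t) (ht : t ≤ T) :
    ∃ j, 1 ≤ j ∧ j ≤ t ∧ σ j = pg := by
  by_contra! h
  have := R.mem_C_of_forall_ne hpg (Nat.zero_le t) ht fun j hj hjt => h j hj hjt
  simp [R.init] at this

lemma notMem_C_of_evict (h : EvictStep R t) : R.p t ∉ R.C t := by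
  obtain ⟨h1, h2, hm, hfull⟩ := h
  rw [R.evict t h1 h2 hm hfull, Finset.mem_insert, Finset.mem_erase]
  rintro (heq | ⟨hne, _⟩)
  · exact hm (heq ▸ R.evict_mem t h1 h2 hm hfull)
  · exact hne rfl

end CacheRun

lemma C_eq_or_card_eq (A B : CacheRun S k T σ) {t : ℕ} (ht : t ≤ T) :
    A.C t = B.C t ∨ (A.C t).card = k ∧ (B.C t).card = k := by
  induction t with
  | zero => exact Or.inl (A.init.trans B.init.symm)
  | succ n ih =>
    rcases ih (by omega) with heq | ⟨hA, hB⟩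
    · by_cases hfull : (A.C n).card < k
      · left
        rw [A.hit (n + 1) (by omega) ht (by simp [hfull]),
          B.hit (n + 1) (by omega) ht (by simp [← heq, hfull]), Nat.add_sub_cancel, heq]
      · have hA : (A.C n).card = k := le_antisymm (A.card_le n) (not_lt.1 hfull)
        exact Or.inr ⟨A.card_C_of_card_pred_eq (by omega) ht hA,
          B.card_C_of_card_pred_eq (by omega) ht (heq ▸ hA)⟩
    · exact Or.inr ⟨A.card_C_of_card_pred_eq (by omega) ht hA,
        B.card_C_of_card_pred_eq (by omega) ht hB⟩

lemma card_C_eq (A B : CacheRun S k T σ) {t : ℕ} (ht : t ≤ T) : (A.C t).card = (B.C t).card := by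
  rcases C_eq_or_card_eq A B ht with h | ⟨hA, hB⟩
  · rw [h]
  · rw [hA, hB]

section LastIdx

variable {R : CacheRun S k T σ} {t i : ℕ}

lemma mem_lastIdx :
    i ∈ lastIdx R t ↔ 1 ≤ i ∧ i ≤ t ∧ σ i ∈ R.C t ∧ ∀ j, i < j → j ≤ t → σ j ≠ σ i := by
  simp only [lastIdx, Finset.mem_filter, Finset.mem_Icc, Nat.succ_le_iff, and_imp, and_assoc]

lemma lt_nextReq_of_mem_lastIdx (ht : t ≤ T) (hi : i ∈ lastIdx R t) : t < nextReq σ T i := by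
  obtain ⟨-, hit, -, hreq⟩ := mem_lastIdx.1 hi
  by_contra! hle
  rcases lt_nextReq_or_eq (σ := σ) (T := T) i with hlt | heq
  · exact hreq _ hlt hle (apply_nextReq (hle.trans ht))
  · omega

lemma eq_of_mem_lastIdx {R' : CacheRun S k T σ} {j : ℕ} (hi : i ∈ lastIdx R t)
    (hj : j ∈ lastIdx R' t) (h : σ i = σ j) : i = j := by
  obtain ⟨-, hit, -, hreqi⟩ := mem_lastIdx.1 hi
  obtain ⟨-, hjt, -, hreqj⟩ := mem_lastIdx.1 hj
  rcases lt_trichotomy i j with hij | rfl | hji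
  · exact absurd h.symm (hreqi j hij hjt)
  · rfl
  · exact absurd h (hreqj i hji hit)

lemma exists_mem_lastIdx {pg : S} (hpg : pg ∈ R.C t) (ht : t ≤ T) :
    ∃ i ∈ lastIdx R t, σ i = pg := by
  obtain ⟨j, hj1, hjt, hj⟩ := R.exists_request hpg ht
  set i := Nat.findGreatest (fun j => σ j = pg) t
  have hspec : σ i = pg := Nat.findGreatest_spec (P := fun j => σ j = pg) hjt hj
  refine ⟨i, mem_lastIdx.2 ⟨hj1.trans (Nat.le_findGreatest hjt hj), Nat.findGreatest_le t,
    by rwa [hspec], fun j hj hjt => by rw [hspec]; exact Nat.findGreatest_is_greatest hj hjt⟩,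
    hspec⟩

lemma card_lastIdx (ht : t ≤ T) : (lastIdx R t).card = (R.C t).card :=
  Finset.card_bij (fun i _ => σ i) (fun _ hi => (mem_lastIdx.1 hi).2.2.1)
    (fun _ hi _ hj h => eq_of_mem_lastIdx hi hj h)
    (fun _ hpg => let ⟨i, hi, hσi⟩ := exists_mem_lastIdx hpg ht; ⟨i, hi, hσi⟩)

lemma lastIdx_congr {R' : CacheRun S k T σ} (h : R.C t = R'.C t) : lastIdx R t = lastIdx R' t := by
  unfold lastIdx
  rw [h]

lemma mem_lastIdx_iff_eq_or_mem_pred (h1 : 1 ≤ t) (h2 : t ≤ T) :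
    i ∈ lastIdx R t ↔ i = t ∨ i ∈ lastIdx R (t - 1) ∧ σ i ∈ R.C t ∧ σ i ≠ σ t := by
  simp only [mem_lastIdx]
  constructor
  · rintro ⟨hi1, hit, hC, hreq⟩
    rcases eq_or_lt_of_le hit with rfl | hlt
    · exact Or.inl rfl
    · have hne : σ i ≠ σ t := fun h => hreq t hlt le_rfl h.symm
      have hC' := Finset.mem_of_mem_insert_of_ne (R.C_subset_insert h1 h2 hC) hne
      exact Or.inr ⟨⟨hi1, by omega, hC', fun j hj hjt => hreq j hj (by omega)⟩, hC, hne⟩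
  · rintro (rfl | ⟨⟨hi1, hit, -, hreq⟩, hC, hne⟩)
    · exact ⟨h1, le_rfl, R.mem_C_self h1 h2, fun j hj hjt => by omega⟩
    · refine ⟨hi1, by omega, hC, fun j hj hjt => ?_⟩
      rcases eq_or_lt_of_le hjt with rfl | hlt
      · exact fun h => hne h.symm
      · exact hreq j hj (by omega)

lemma lastIdx_subset_insert (h1 : 1 ≤ t) (h2 : t ≤ T) :
    lastIdx R t ⊆ insert t (lastIdx R (t - 1)) := fun i hi => by
  rcases (mem_lastIdx_iff_eq_or_mem_pred h1 h2).1 hi with rfl | ⟨hi, -⟩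
  · exact Finset.mem_insert_self _ _
  · exact Finset.mem_insert_of_mem hi

lemma self_mem_lastIdx (h1 : 1 ≤ t) (h2 : t ≤ T) : t ∈ lastIdx R t :=
  (mem_lastIdx_iff_eq_or_mem_pred h1 h2).2 (Or.inl rfl)

lemma notMem_lastIdx_self_pred : t ∉ lastIdx R (t - 1) := fun h => by
  have := mem_lastIdx.1 h
  omega

lemma exists_lastIdx_eq_of_hit (h1 : 1 ≤ t) (h2 : t ≤ T) (hm : σ t ∈ R.C (t - 1)) :
    ∃ x ∈ lastIdx R (t - 1), nextReq σ T x = t ∧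
      lastIdx R t = insert t ((lastIdx R (t - 1)).erase x) := by
  obtain ⟨x, hx, hσx⟩ := exists_mem_lastIdx hm (by omega)
  have hCt : R.C t = R.C (t - 1) := by rw [R.hit t h1 h2 (Or.inl hm), Finset.insert_eq_of_mem hm]
  refine ⟨x, hx, ?_, ?_⟩
  · have := lt_nextReq_of_mem_lastIdx (by omega) hx
    have := nextReq_le_of_eq (T := T) (show x < t by have := (mem_lastIdx.1 hx).2.1; omega)
      h2 hσx.symm
    omega
  · ext i
    rw [mem_lastIdx_iff_eq_or_mem_pred h1 h2, Finset.mem_insert, Finset.mem_erase, hCt, ← hσx]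
    refine or_congr_right ⟨fun ⟨hi, _, hne⟩ => ⟨fun h => hne (h ▸ rfl), hi⟩,
      fun ⟨hne, hi⟩ => ⟨hi, (mem_lastIdx.1 hi).2.2.1, fun h => hne (eq_of_mem_lastIdx hi hx h)⟩⟩

lemma exists_evictsIdx (h : EvictStep R t) : ∃ e, EvictsIdx R t e := by
  obtain ⟨h1, h2, hm, hfull⟩ := h
  obtain ⟨e, he, hσe⟩ := exists_mem_lastIdx (R.evict_mem t h1 h2 hm hfull) (by omega)
  exact ⟨e, ⟨h1, h2, hm, hfull⟩, he, hσe.symm⟩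

lemma lastIdx_eq_of_evictsIdx {e : ℕ} (he : EvictsIdx R t e) :
    lastIdx R t = insert t ((lastIdx R (t - 1)).erase e) := by
  obtain ⟨⟨h1, h2, hm, hfull⟩, he, hpe⟩ := he
  ext i
  rw [mem_lastIdx_iff_eq_or_mem_pred h1 h2, Finset.mem_insert, Finset.mem_erase,
    R.evict t h1 h2 hm hfull, Finset.mem_insert, Finset.mem_erase, hpe]
  refine or_congr_right ⟨fun ⟨hi, hC, hne⟩ => ⟨?_, hi⟩, fun ⟨hne, hi⟩ => ⟨hi, ?_, ?_⟩⟩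
  · rintro rfl
    exact (hC.resolve_left hne).1 rfl
  · exact Or.inr ⟨fun h => hne (eq_of_mem_lastIdx hi he h), (mem_lastIdx.1 hi).2.2.1⟩
  · exact fun h => hm (h ▸ (mem_lastIdx.1 hi).2.2.1)

/-- An evicted page is not cached again before it is requested again. -/
lemma EvictsIdx.eq {t' e : ℕ} (h : EvictsIdx R t e) (h' : EvictsIdx R t' e) : t = t' := by
  wlog hlt : t < t' generalizing t t'
  · rcases eq_or_lt_of_le (not_lt.1 hlt) with heq | hlt'
    · exact heq.symm
    · exact (this h' h hlt').symm
  obtain ⟨hstep, he, hpe⟩ := h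
  obtain ⟨⟨h1', h2', -⟩, he', -⟩ := h'
  obtain ⟨-, -, hC', hreq'⟩ := mem_lastIdx.1 he'
  have hC := R.mem_C_of_forall_ne (t := t) hC' (by omega) (by omega)
    fun j hj hjt => hreq' j (by have := (mem_lastIdx.1 he).2.1; omega) hjt
  exact (R.notMem_C_of_evict hstep (hpe ▸ hC)).elim

end LastIdx

section Potential

variable {A B R : CacheRun S k T σ} {t θ : ℕ}

noncomputable def dueCount (R : CacheRun S k T σ) (θ t : ℕ) : ℕ :=
  ((lastIdx R t).filter fun i => nextReq σ T i ≤ θ).card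

noncomputable def missCount (R : CacheRun S k T σ) (t : ℕ) : ℕ :=
  ((Finset.Icc 1 t).filter fun s => σ s ∉ R.C (s - 1)).card

def IsMistake (R : CacheRun S k T σ) (t : ℕ) : Prop :=
  ∃ e, EvictsIdx R t e ∧ ∃ z ∈ lastIdx R (t - 1), nextReq σ T e < nextReq σ T z

noncomputable def mistakeCount (R : CacheRun S k T σ) (t : ℕ) : ℕ :=
  ((Finset.Icc 1 t).filter (IsMistake R)).card

def PotentialBound (A B : CacheRun S k T σ) (θ t : ℕ) : Prop :=
  missCount B t + dueCount A θ t ≤ missCount A t + mistakeCount B t + dueCount B θ t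

lemma missCount_of_hit (h1 : 1 ≤ t) (hm : σ t ∈ R.C (t - 1)) :
    missCount R t = missCount R (t - 1) := by
  rw [missCount, card_filter_Icc_one_eq_pred_add _ h1, if_neg (not_not.2 hm), add_zero, missCount]

lemma missCount_of_miss (h1 : 1 ≤ t) (hm : σ t ∉ R.C (t - 1)) :
    missCount R t = missCount R (t - 1) + 1 := by
  rw [missCount, card_filter_Icc_one_eq_pred_add _ h1, if_pos hm, missCount]

lemma mistakeCount_of_not_isMistake (h1 : 1 ≤ t) (hm : ¬IsMistake R t) :
    mistakeCount R t = mistakeCount R (t - 1) := by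
  rw [mistakeCount, card_filter_Icc_one_eq_pred_add _ h1, if_neg hm, add_zero, mistakeCount]

lemma mistakeCount_of_isMistake (h1 : 1 ≤ t) (hm : IsMistake R t) :
    mistakeCount R t = mistakeCount R (t - 1) + 1 := by
  rw [mistakeCount, card_filter_Icc_one_eq_pred_add _ h1, if_pos hm, mistakeCount]

lemma not_isMistake_of_hit (hm : σ t ∈ R.C (t - 1)) : ¬IsMistake R t :=
  fun ⟨_, ⟨⟨_, _, hmiss, _⟩, _⟩, _⟩ => hmiss hm

lemma dueCount_eq_zero (ht : t ≤ T) (hθ : θ ≤ t) : dueCount R θ t = 0 :=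
  Finset.card_eq_zero.2 <| Finset.filter_eq_empty_iff.2 fun _ hi => by
    have := lt_nextReq_of_mem_lastIdx ht hi
    omega

lemma dueCount_le (h1 : 1 ≤ t) (h2 : t ≤ T) (θ : ℕ) :
    dueCount R θ t ≤ dueCount R θ (t - 1) + if nextReq σ T t ≤ θ then 1 else 0 := by
  calc dueCount R θ t
      ≤ ((insert t (lastIdx R (t - 1))).filter fun i => nextReq σ T i ≤ θ).card :=
        Finset.card_le_card (Finset.filter_subset_filter _ (lastIdx_subset_insert h1 h2))
    _ ≤ dueCount R θ (t - 1) + if nextReq σ T t ≤ θ then 1 else 0 := by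
        rw [Finset.filter_insert]
        split_ifs
        · exact Finset.card_insert_le _ _
        · exact Nat.le_add_right _ _

lemma dueCount_of_hit (h1 : 1 ≤ t) (h2 : t ≤ T) (hm : σ t ∈ R.C (t - 1)) (θ : ℕ) :
    dueCount R θ t + (if t ≤ θ then 1 else 0) =
      dueCount R θ (t - 1) + if nextReq σ T t ≤ θ then 1 else 0 := by
  obtain ⟨x, hx, hνx, hJ⟩ := exists_lastIdx_eq_of_hit h1 h2 hm
  have := card_filter_insert_erase (fun i => nextReq σ T i ≤ θ) notMem_lastIdx_self_pred hx
  rwa [hνx, ← hJ] at this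

lemma dueCount_of_evictsIdx {e : ℕ} (he : EvictsIdx R t e) (θ : ℕ) :
    dueCount R θ t + (if nextReq σ T e ≤ θ then 1 else 0) =
      dueCount R θ (t - 1) + if nextReq σ T t ≤ θ then 1 else 0 := by
  rw [dueCount, lastIdx_eq_of_evictsIdx he]
  exact card_filter_insert_erase _ notMem_lastIdx_self_pred he.2.1

lemma dueCount_le_of_not_isMistake {b : ℕ} (hb : EvictsIdx B t b) (hnm : ¬IsMistake B t)
    (hθ : nextReq σ T b ≤ θ) : dueCount A θ t ≤ dueCount B θ t := by
  obtain ⟨h1, h2, -⟩ := hb.1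
  refine card_filter_le_card_filter _
    (by rw [card_lastIdx h2, card_lastIdx h2, card_C_eq A B h2]) fun y hy => ?_
  obtain ⟨hyB, hyA⟩ := Finset.mem_sdiff.1 hy
  rw [lastIdx_eq_of_evictsIdx hb, Finset.mem_insert, Finset.mem_erase] at hyB
  rcases hyB with rfl | ⟨-, hy⟩
  · exact absurd (self_mem_lastIdx h1 h2) hyA
  · exact (not_lt.1 fun hlt => hnm ⟨b, hb, y, hy, hlt⟩).trans hθ

lemma PotentialBound.missCount_le (h : PotentialBound A B 0 t) (ht : t ≤ T) :
    missCount B t ≤ missCount A t + mistakeCount B t := by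
  have := dueCount_eq_zero (R := B) ht (Nat.zero_le t)
  unfold PotentialBound at h
  omega

/-- When `A` hits and `B` misses, `A` caches a page due at time `t` and `B` does not. -/
lemma PotentialBound.missCount_lt (h : PotentialBound A B t (t - 1)) (h1 : 1 ≤ t) (h2 : t ≤ T)
    (hA : σ t ∈ A.C (t - 1)) (hB : σ t ∉ B.C (t - 1)) :
    missCount B (t - 1) < missCount A (t - 1) + mistakeCount B (t - 1) := by
  obtain ⟨x, hx, hνx, -⟩ := exists_lastIdx_eq_of_hit h1 h2 hA
  have hApos : 0 < dueCount A t (t - 1) :=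
    Finset.card_pos.2 ⟨x, Finset.mem_filter.2 ⟨hx, hνx.le⟩⟩
  have hBzero : dueCount B t (t - 1) = 0 :=
    Finset.card_eq_zero.2 <| Finset.filter_eq_empty_iff.2 fun y hy hle => by
      have hlt := lt_nextReq_of_mem_lastIdx (by omega) hy
      have hσ := apply_nextReq (σ := σ) (T := T) (t := y) (by omega)
      rw [show nextReq σ T y = t by omega] at hσ
      exact hB (hσ ▸ (mem_lastIdx.1 hy).2.2.1)
  unfold PotentialBound at h
  omega

lemma potentialBound_of_hit (h1 : 1 ≤ t) (h2 : t ≤ T) (hB : σ t ∈ B.C (t - 1))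
    (ih : PotentialBound A B θ (t - 1)) : PotentialBound A B θ t := by
  have hBc := dueCount_of_hit h1 h2 hB θ
  unfold PotentialBound at *
  rw [missCount_of_hit h1 hB, mistakeCount_of_not_isMistake h1 (not_isMistake_of_hit hB)]
  by_cases hA : σ t ∈ A.C (t - 1)
  · have := dueCount_of_hit h1 h2 hA θ
    rw [missCount_of_hit h1 hA]
    omega
  · have hAc := dueCount_le (R := A) h1 h2 θ
    rw [missCount_of_miss h1 hA]
    split_ifs at hAc hBc <;> omega

lemma potentialBound_of_miss_of_card_lt (h1 : 1 ≤ t) (h2 : t ≤ T) (hB : σ t ∉ B.C (t - 1))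
    (hc : (B.C (t - 1)).card < k) (ih : PotentialBound A B 0 (t - 1)) :
    PotentialBound A B θ t := by
  have hCeq : A.C (t - 1) = B.C (t - 1) :=
    (C_eq_or_card_eq A B (by omega)).resolve_right fun h => hc.ne h.2
  have hA : σ t ∉ A.C (t - 1) := hCeq ▸ hB
  have hCt : A.C t = B.C t := by
    rw [A.hit t h1 h2 (Or.inr (hCeq ▸ hc)), B.hit t h1 h2 (Or.inr hc), hCeq]
  have hnm : ¬IsMistake B t := fun ⟨_, ⟨⟨_, _, _, hfull⟩, _⟩, _⟩ => hc.ne hfull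
  have := ih.missCount_le (by omega)
  unfold PotentialBound
  rw [missCount_of_miss h1 hA, missCount_of_miss h1 hB, mistakeCount_of_not_isMistake h1 hnm,
    dueCount, dueCount, lastIdx_congr hCt]
  omega

lemma potentialBound_of_hit_of_evictsIdx {b : ℕ} (hA : σ t ∈ A.C (t - 1))
    (hb : EvictsIdx B t b) (ih : ∀ θ', PotentialBound A B θ' (t - 1)) :
    PotentialBound A B θ t := by
  obtain ⟨h1, h2, hB, -⟩ := hb.1
  have hAc := dueCount_of_hit h1 h2 hA θ
  have hBc := dueCount_of_evictsIdx hb θ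
  have hνb := lt_nextReq_of_mem_lastIdx (by omega) hb.2.1
  have slack := (ih t).missCount_lt h1 h2 hA hB
  have ihθ := ih θ
  unfold PotentialBound at ihθ ⊢
  rw [missCount_of_miss h1 hB, missCount_of_hit h1 hA]
  by_cases hm : IsMistake B t
  · rw [mistakeCount_of_isMistake h1 hm]
    split_ifs at hAc hBc <;> omega
  rw [mistakeCount_of_not_isMistake h1 hm]
  rcases le_or_gt (nextReq σ T b) θ with hbθ | hbθ
  · have := dueCount_le_of_not_isMistake (A := A) hb hm hbθ
    omega
  rcases lt_or_ge θ t with hθ | hθ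
  · have := dueCount_eq_zero (R := A) h2 hθ.le
    omega
  rw [if_pos hθ] at hAc
  rw [if_neg (not_le.2 hbθ)] at hBc
  omega

lemma potentialBound_of_miss_of_evictsIdx {b : ℕ} (hA : σ t ∉ A.C (t - 1))
    (hb : EvictsIdx B t b) (ih : ∀ θ', PotentialBound A B θ' (t - 1)) :
    PotentialBound A B θ t := by
  obtain ⟨h1, h2, hB, -⟩ := hb.1
  have hAc := dueCount_le (R := A) h1 h2 θ
  have hBc := dueCount_of_evictsIdx hb θ
  have base := (ih 0).missCount_le (by omega)
  have ihθ := ih θ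
  unfold PotentialBound at ihθ ⊢
  rw [missCount_of_miss h1 hB, missCount_of_miss h1 hA]
  by_cases hm : IsMistake B t
  · rw [mistakeCount_of_isMistake h1 hm]
    split_ifs at hAc hBc <;> omega
  rw [mistakeCount_of_not_isMistake h1 hm]
  rcases le_or_gt (nextReq σ T b) θ with hbθ | hbθ
  · have := dueCount_le_of_not_isMistake (A := A) hb hm hbθ
    omega
  rw [if_neg (not_le.2 hbθ)] at hBc
  omega

theorem potentialBound (A B : CacheRun S k T σ) (ht : t ≤ T) (θ : ℕ) :
    PotentialBound A B θ t := by
  induction t generalizing θ with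
  | zero => simp [PotentialBound, missCount, mistakeCount, dueCount, lastIdx]
  | succ n ih =>
    have h1 : 1 ≤ n + 1 := n.succ_pos
    have ih' : ∀ θ', PotentialBound A B θ' (n + 1 - 1) := ih (by omega)
    by_cases hB : σ (n + 1) ∈ B.C (n + 1 - 1)
    · exact potentialBound_of_hit h1 ht hB (ih' θ)
    by_cases hc : (B.C (n + 1 - 1)).card < k
    · exact potentialBound_of_miss_of_card_lt h1 ht hB hc (ih' 0)
    obtain ⟨b, hb⟩ := exists_evictsIdx ⟨h1, ht, hB, le_antisymm (B.card_le _) (not_lt.1 hc)⟩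
    by_cases hA : σ (n + 1) ∈ A.C (n + 1 - 1)
    · exact potentialBound_of_hit_of_evictsIdx hA hb ih'
    · exact potentialBound_of_miss_of_evictsIdx hA hb ih'

theorem misses_le_add_mistakeCount (A B : CacheRun S k T σ) :
    misses B ≤ misses A + mistakeCount B T :=
  (potentialBound A B le_rfl 0).missCount_le le_rfl

end Potential

section Loss

noncomputable def lossUnits (σ : ℕ → S) (T : ℕ) (ω : ℕ → ℕ) : Finset (Σ _ : ℕ, ℕ) :=
  (Finset.Icc 1 T).sigma fun x =>
    Finset.Ico (min (nextReq σ T x) (ω x)) (max (nextReq σ T x) (ω x))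

lemma card_lossUnits (ω : ℕ → ℕ) : (lossUnits σ T ω).card = totalLoss σ T ω := by
  rw [lossUnits, Finset.card_sigma, totalLoss]
  refine Finset.sum_congr rfl fun x _ => ?_
  rw [Nat.card_Ico, Nat.dist]
  omega

variable {B : CacheRun S k T σ} {ω : ℕ → ℕ} {t : ℕ}

lemma exists_mem_lossUnits_of_isMistake (hB : IsBlindOracle B ω) (hm : IsMistake B t) :
    ∃ e, EvictsIdx B t e ∧ nextReq σ T e ≤ T ∧ ∃ x, ⟨x, nextReq σ T e⟩ ∈ lossUnits σ T ω := by
  obtain ⟨e, he, z, hz, hνez⟩ := hm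
  have hωz := hB t he.1 e he.2.1 he.2.2 z hz
  have hbound : ∀ i ∈ lastIdx B (t - 1), i ∈ Finset.Icc 1 T := fun i hi => by
    have := mem_lastIdx.1 hi
    have := he.1.2.1
    exact Finset.mem_Icc.2 ⟨by omega, by omega⟩
  refine ⟨e, he, by have := nextReq_le_succ (σ := σ) (T := T) z; omega, ?_⟩
  simp only [lossUnits, Finset.mem_sigma, Finset.mem_Ico]
  by_cases hover : nextReq σ T e < ω e
  · exact ⟨e, hbound e he.2.1, by omega, by omega⟩
  · exact ⟨z, hbound z hz, by omega, by omega⟩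

theorem mistakeCount_le_totalLoss (hB : IsBlindOracle B ω) :
    mistakeCount B T ≤ totalLoss σ T ω := by
  rw [← card_lossUnits]
  choose! e he hlive x hx using fun t (ht : t ∈ (Finset.Icc 1 T).filter (IsMistake B)) =>
    exists_mem_lossUnits_of_isMistake hB (Finset.mem_filter.1 ht).2
  refine Finset.card_le_card_of_injOn (fun t => ⟨x t, nextReq σ T (e t)⟩) hx
    fun t ht t' ht' h => ?_
  have hν : nextReq σ T (e t) = nextReq σ T (e t') := (Sigma.mk.inj_iff.1 h).2 |> eq_of_heq
  exact (he t ht).eq (eq_of_nextReq_eq (hlive t ht) hν ▸ he t' ht')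

end Loss

theorem stmt4_general {S : Type} [DecidableEq S] (k T : ℕ) (σ : ℕ → S) (ω : ℕ → ℕ)
    (B A : CacheRun S k T σ) (hB : IsBlindOracle B ω) :
    misses B ≤ misses A + totalLoss σ T ω ∧
    (0 < misses A →
      (misses B : ℝ) / misses A ≤ 1 + (totalLoss σ T ω : ℝ) / misses A) := by
  have hmain : misses B ≤ misses A + totalLoss σ T ω :=
    (misses_le_add_mistakeCount A B).trans <|
      Nat.add_le_add_left (mistakeCount_le_totalLoss hB) _
  refine ⟨hmain, fun hpos => ?_⟩
  have hpos' : (0 : ℝ) < misses A := by exact_mod_cast hpos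
  rw [one_add_div hpos'.ne', div_le_div_iff_of_pos_right hpos']
  exact_mod_cast hmain

/-- For BlindOracle, `OBJ_B ≤ OPT + η`; in particular its competitive
ratio is at most `1 + η/OPT`. -/
theorem stmt4 {S : Type} [DecidableEq S] (k T : ℕ) (hk : 1 ≤ k) (σ : ℕ → S) (ω : ℕ → ℕ)
    (B A : CacheRun S k T σ) (hB : IsBlindOracle B ω) (hA : IsBelady A) :
    misses B ≤ misses A + totalLoss σ T ω ∧
    (0 < misses A →
      (misses B : ℝ) / misses A ≤ 1 + (totalLoss σ T ω : ℝ) / misses A) :=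
  stmt4_general k T σ ω B A hB

end Caching
end

section
/- Fix γ ∈ (0,1) and α ∈ (γ,1). Set δ = α/γ − 1, β = δ²γ/(2+δ), and θ = e^β/(e^β − 1)². Then for every T ∈ ℕ and every function N : {0,1}^T → {1,…,T}, if ξ = (ξ₁,…,ξ_T) are i.i.d. Bernoulli(γ) random variables, then E[S(ξ, N(ξ))] ≤ θ + α·E[N(ξ)]. -/
namespace Caching

attribute [local instance low] Classical.propDecidable

variable {S : Type} [DecidableEq S]

/-!
For every outcome, `S(ξ, N) - α N ≤ #{j ≤ T : α N + j ≤ S(ξ, N)}`, and this count is at most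
the sum of the same counts with `N` replaced by every `m ∈ [1, T]`; taking expectations removes
the dependence on `N`:
`E[S(ξ, N)] - α E[N] ≤ Σ_{m=1}^T Σ_{j=0}^T P(S(ξ, m) ≥ α m + j)`.
Chernoff's bound at `t = log (1 + δ)`, with `log (1 + δ) ≥ 2δ / (2 + δ)`, bounds each term by
`e^{-β m} e^{-β j}`, and the double geometric series is at most `e^{-β} / (1 - e^{-β})² = θ`.
-/

open Finset Real

section Exponents

variable {γ δ : ℝ}

lemma sq_mul_div_add_mul_le_mul_log (hγ : 0 ≤ γ) (hδ : 0 ≤ δ) :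
    δ ^ 2 * γ / (2 + δ) + γ * δ ≤ γ * (1 + δ) * log (1 + δ) := by
  have hlog := le_log_one_add_of_nonneg hδ
  have key : δ ^ 2 * γ / (2 + δ) + γ * δ = γ * (1 + δ) * (2 * δ / (δ + 2)) := by
    field_simp
    ring
  rw [key]
  gcongr

lemma sq_mul_div_le_log (hδ : 0 ≤ δ) (hγδ : γ * δ ≤ 2) :
    δ ^ 2 * γ / (2 + δ) ≤ log (1 + δ) := by
  refine le_trans ?_ (le_log_one_add_of_nonneg hδ)
  rw [add_comm δ 2]
  exact div_le_div_of_nonneg_right (by nlinarith) (by linarith)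

end Exponents

lemma exp_neg_div_one_sub_exp_neg_sq (β : ℝ) :
    exp (-β) / (1 - exp (-β)) ^ 2 = exp β / (exp β - 1) ^ 2 := by
  rw [exp_neg]
  rcases eq_or_ne β 0 with rfl | hβ
  · simp
  · have : exp β - 1 ≠ 0 := sub_ne_zero.mpr fun h => hβ ((exp_eq_one_iff β).mp h)
    field_simp

lemma sum_Icc_sum_range_pow_mul_pow_le {r : ℝ} (h0 : 0 ≤ r) (h1 : r < 1) (M J : ℕ) :
    ∑ m ∈ Icc 1 M, ∑ j ∈ range J, r ^ m * r ^ j ≤ r / (1 - r) ^ 2 := by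
  have hM : ∑ m ∈ Icc 1 M, r ^ m ≤ r / (1 - r) := by
    have := geom_sum_Ico_le_of_lt_one (m := 1) (n := M + 1) h0 h1
    rwa [Ico_add_one_right_eq_Icc, pow_one] at this
  have hJ : ∑ j ∈ range J, r ^ j ≤ 1 / (1 - r) := by
    have := geom_sum_Ico_le_of_lt_one (m := 0) (n := J) h0 h1
    rwa [← range_eq_Ico, pow_zero] at this
  rw [← sum_mul_sum]
  calc (∑ m ∈ Icc 1 M, r ^ m) * ∑ j ∈ range J, r ^ j ≤ r / (1 - r) * (1 / (1 - r)) := by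
        gcongr
    _ = r / (1 - r) ^ 2 := by rw [div_mul_div_comm, mul_one, sq]

lemma le_sum_range_ite_le {c : ℝ} {n : ℕ} (hc : c ≤ n) :
    c ≤ ∑ j ∈ range (n + 1), if (j : ℝ) ≤ c then 1 else 0 := by
  rw [sum_boole]
  rcases lt_or_ge c 0 with hneg | hnonneg
  · exact hneg.le.trans (Nat.cast_nonneg _)
  · have hsub : range (⌊c⌋₊ + 1) ⊆ (range (n + 1)).filter fun j : ℕ => (j : ℝ) ≤ c := by
      intro j hj
      rw [mem_range, Nat.lt_succ_iff] at hj
      refine mem_filter.mpr ⟨mem_range.mpr ?_, (Nat.le_floor_iff hnonneg).mp hj⟩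
      have := Nat.floor_le_floor hc
      rw [Nat.floor_natCast] at this
      omega
    calc c ≤ ⌊c⌋₊ + 1 := (Nat.lt_floor_add_one c).le
      _ = (range (⌊c⌋₊ + 1)).card := by simp
      _ ≤ _ := by exact_mod_cast card_le_card hsub

noncomputable def bernExpect (γ : ℝ) {T : ℕ} (f : (Fin T → Bool) → ℝ) : ℝ :=
  ∑ x, bernWeight γ x * f x

section BernoulliExpectation

variable {γ : ℝ} {T : ℕ}

lemma bernWeight_nonneg (hγ0 : 0 ≤ γ) (hγ1 : γ ≤ 1) (x : Fin T → Bool) :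
    0 ≤ bernWeight γ x :=
  prod_nonneg fun i _ => by split <;> linarith

lemma bernExpect_mono (hγ0 : 0 ≤ γ) (hγ1 : γ ≤ 1) {f g : (Fin T → Bool) → ℝ}
    (h : ∀ x, f x ≤ g x) : bernExpect γ f ≤ bernExpect γ g :=
  sum_le_sum fun x _ => mul_le_mul_of_nonneg_left (h x) (bernWeight_nonneg hγ0 hγ1 x)

lemma bernExpect_add (f g : (Fin T → Bool) → ℝ) :
    bernExpect γ (fun x => f x + g x) = bernExpect γ f + bernExpect γ g := by
  simp only [bernExpect, mul_add, sum_add_distrib]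

lemma bernExpect_const_mul (c : ℝ) (f : (Fin T → Bool) → ℝ) :
    bernExpect γ (fun x => c * f x) = c * bernExpect γ f := by
  simp only [bernExpect, mul_sum, mul_left_comm]

lemma bernExpect_sum {ι : Type*} (s : Finset ι) (f : ι → (Fin T → Bool) → ℝ) :
    bernExpect γ (fun x => ∑ i ∈ s, f i x) = ∑ i ∈ s, bernExpect γ (f i) := by
  simp only [bernExpect, mul_sum]
  exact sum_comm

lemma bernExpect_pow_scount (a : ℝ) (m : ℕ) :
    bernExpect γ (fun x : Fin T → Bool => a ^ scount x m) = (γ * a + (1 - γ)) ^ min T m := by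
  set g : Fin T → Bool → ℝ := fun i b =>
    (if b then γ else 1 - γ) * (if (i : ℕ) < m ∧ b then a else 1)
  have factor : ∀ x : Fin T → Bool, bernWeight γ x * a ^ scount x m = ∏ i, g i (x i) := by
    intro x
    rw [bernWeight, scount, ← prod_const, prod_filter, ← prod_mul_distrib]
  have coord : ∀ i : Fin T, ∑ b, g i b = if (i : ℕ) < m then γ * a + (1 - γ) else 1 := by
    intro i
    by_cases hi : (i : ℕ) < m <;> simp [g, hi]
  rw [bernExpect, Fintype.sum_congr _ _ factor, ← Fintype.piFinset_univ,
    ← prod_univ_sum (fun _ => univ) g, prod_congr rfl fun i _ => coord i, ← prod_filter,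
    prod_const, Fin.card_filter_val_lt]

lemma bernExpect_scount_ge_le_exp_mul (hγ0 : 0 ≤ γ) (hγ1 : γ ≤ 1) {t : ℝ} (ht : 0 ≤ t)
    (m : ℕ) (s : ℝ) :
    bernExpect γ (fun x : Fin T → Bool => if s ≤ scount x m then 1 else 0) ≤
      exp (-t * s) * (γ * exp t + (1 - γ)) ^ m := by
  have markov : ∀ x : Fin T → Bool,
      (if s ≤ scount x m then 1 else 0 : ℝ) ≤ exp (-t * s) * exp t ^ scount x m := by
    intro x
    split_ifs with h
    · rw [← exp_nat_mul, ← exp_add]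
      exact one_le_exp (by nlinarith)
    · positivity
  have mgf_ge_one : 1 ≤ γ * exp t + (1 - γ) := by nlinarith [one_le_exp ht]
  calc bernExpect γ (fun x => if s ≤ scount x m then 1 else 0)
      ≤ bernExpect γ (fun x => exp (-t * s) * exp t ^ scount x m) :=
        bernExpect_mono hγ0 hγ1 markov
    _ = exp (-t * s) * (γ * exp t + (1 - γ)) ^ min T m := by
        rw [bernExpect_const_mul, bernExpect_pow_scount]
    _ ≤ exp (-t * s) * (γ * exp t + (1 - γ)) ^ m := by
        gcongr
        exact min_le_right T m

lemma bernExpect_scount_sub_ge_le (hγ0 : 0 ≤ γ) (hγ1 : γ ≤ 1) {α β δ : ℝ} (hδ : 0 ≤ δ)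
    (hβα : β + γ * δ ≤ α * log (1 + δ)) (hβ : β ≤ log (1 + δ)) (m j : ℕ) :
    bernExpect γ (fun x : Fin T → Bool => if (j : ℝ) ≤ scount x m - α * m then 1 else 0) ≤
      exp (-β) ^ m * exp (-β) ^ j := by
  set L := log (1 + δ)
  have hexpL : exp L = 1 + δ := exp_log (by linarith)
  have mgf_le : γ * exp L + (1 - γ) ≤ exp (γ * δ) := by
    rw [hexpL]
    linarith [add_one_le_exp (γ * δ)]
  simp only [le_sub_iff_add_le]
  calc bernExpect γ (fun x : Fin T → Bool => if (j : ℝ) + α * m ≤ scount x m then 1 else 0)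
      ≤ exp (-L * (j + α * m)) * (γ * exp L + (1 - γ)) ^ m :=
        bernExpect_scount_ge_le_exp_mul hγ0 hγ1 (log_nonneg (by linarith)) m _
    _ ≤ exp (-L * (j + α * m)) * exp (γ * δ) ^ m := by
        gcongr
    _ = exp (m * (γ * δ - α * L) + j * (-L)) := by
        rw [← exp_nat_mul, ← exp_add]
        ring_nf
    _ ≤ exp (m * (-β) + j * (-β)) := by
        gcongr
        linarith
    _ = exp (-β) ^ m * exp (-β) ^ j := by
        rw [← exp_nat_mul, ← exp_nat_mul, ← exp_add]

lemma scount_le (x : Fin T → Bool) (m : ℕ) : scount x m ≤ T :=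
  (card_filter_le _ _).trans (card_fin T).le

lemma scount_sub_le_sum_sum_ite {α : ℝ} (hα : 0 ≤ α) (x : Fin T → Bool)
    {s : Finset ℕ} {n : ℕ} (hn : n ∈ s) :
    scount x n - α * n ≤
      ∑ m ∈ s, ∑ j ∈ range (T + 1), if (j : ℝ) ≤ scount x m - α * m then 1 else 0 := by
  refine (le_sum_range_ite_le ?_).trans
    (single_le_sum (f := fun m => ∑ j ∈ range (T + 1),
      if (j : ℝ) ≤ scount x m - α * m then (1 : ℝ) else 0)
      (fun m _ => sum_nonneg fun j _ => by positivity) hn)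
  have : (0 : ℝ) ≤ α * n := by positivity
  have : (scount x n : ℝ) ≤ T := by exact_mod_cast scount_le x n
  linarith

end BernoulliExpectation

/-- For i.i.d. Bernoulli(γ) bits and any `N` with `1 ≤ N(ξ) ≤ T`,
`E[S(ξ, N(ξ))] ≤ θ + α·E[N(ξ)]`, where `δ = α/γ − 1`, `β = δ²γ/(2+δ)`, and
`θ = e^β/(e^β − 1)²`. -/
theorem stmt13 (γ α δ β θ : ℝ) (hγ0 : 0 < γ) (hγ1 : γ < 1) (hα0 : γ < α) (hα1 : α < 1)
    (hδ : δ = α / γ - 1) (hβ : β = δ ^ 2 * γ / (2 + δ))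
    (hθ : θ = Real.exp β / (Real.exp β - 1) ^ 2)
    (T : ℕ) (N : (Fin T → Bool) → ℕ) (hN : ∀ x, 1 ≤ N x ∧ N x ≤ T) :
    ∑ x : Fin T → Bool, bernWeight γ x * scount x (N x) ≤
      θ + α * ∑ x : Fin T → Bool, bernWeight γ x * N x := by
  have hδ0 : 0 < δ := by
    rw [hδ, sub_pos, one_lt_div hγ0]
    exact hα0
  have hα : α = γ * (1 + δ) := by
    rw [hδ]
    field_simp
    ring
  have hβ0 : 0 < β := by
    rw [hβ]
    positivity
  have hβα : β + γ * δ ≤ α * log (1 + δ) := by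
    rw [hβ, hα]
    exact sq_mul_div_add_mul_le_mul_log hγ0.le hδ0.le
  have hβL : β ≤ log (1 + δ) := by
    rw [hβ]
    exact sq_mul_div_le_log hδ0.le (by nlinarith)
  have hr1 : exp (-β) < 1 := exp_lt_one_iff.mpr (neg_lt_zero.mpr hβ0)
  calc bernExpect γ (fun x => (scount x (N x) : ℝ))
      ≤ bernExpect γ (fun x => α * N x + ∑ m ∈ Icc 1 T, ∑ j ∈ range (T + 1),
          if (j : ℝ) ≤ scount x m - α * m then 1 else 0) :=
        bernExpect_mono hγ0.le hγ1.le fun x => by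
          linarith [scount_sub_le_sum_sum_ite (α := α) (by linarith) x (mem_Icc.mpr (hN x))]
    _ = α * bernExpect γ (fun x => (N x : ℝ)) + ∑ m ∈ Icc 1 T, ∑ j ∈ range (T + 1),
          bernExpect γ (fun x : Fin T → Bool =>
            if (j : ℝ) ≤ scount x m - α * m then 1 else 0) := by
        simp only [bernExpect_add, bernExpect_const_mul, bernExpect_sum]
    _ ≤ α * bernExpect γ (fun x => (N x : ℝ)) + ∑ m ∈ Icc 1 T, ∑ j ∈ range (T + 1),
          exp (-β) ^ m * exp (-β) ^ j := by
        gcongr with m _ j _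
        exact bernExpect_scount_sub_ge_le hγ0.le hγ1.le hδ0.le hβα hβL m j
    _ ≤ α * bernExpect γ (fun x => (N x : ℝ)) + θ := by
        rw [hθ, ← exp_neg_div_one_sub_exp_neg_sq]
        gcongr
        exact sum_Icc_sum_range_pow_mul_pow_le (exp_nonneg _) hr1 T (T + 1)
    _ = θ + α * bernExpect γ (fun x => (N x : ℝ)) := add_comm _ _

end Caching
end
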